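/- Fix a nonzero w ∈ ℂ^N, an N×N Hermitian matrix R̂, a Hermitian positive definite matrix C, and k > 0. The function f(R) = w^H R w - k · (w^H w) · Tr((R - R̂)^H C^{-1} (R - R̂)) over N×N complex matrices R attains its global maximum at R* = R̂ + C w w^H / (2k w^H w), and the maximum value equals w^H R̂ w + (1/(4k)) w^H C w. -/

import Mathlib

open Matrix
open scoped ComplexOrder

noncomputable def qf {N : ℕ} (R : Matrix (Fin N) (Fin N) ℂ) (w : Fin N → ℂ) : ℝ :=
  (star w ⬝ᵥ R.mulVec w).re

/-!
Complete the square for the real inner product `⟪X, Y⟫ = Re Tr (Xᴴ C⁻¹ Y)` on matrices.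
Writing `W = w wᴴ`, one has `wᴴ X w = Tr (X W) = Tr ((C W)ᴴ C⁻¹ X)`, so with `Δ = R - R̂` and
`μ = k ‖w‖²`,
`f R = wᴴ R̂ w + ⟪C W, Δ⟫ - μ ⟪Δ, Δ⟫ = wᴴ R̂ w + ⟪C W, C W⟫ / (4 μ) - μ ⟪Δ - C W / (2 μ), Δ - C W / (2 μ)⟫`,
where `⟪C W, C W⟫ = (wᴴ C w) ‖w‖²`. The last term vanishes at `R = R*` and is
nonnegative because `C⁻¹` is positive definite.
-/

namespace Matrix

variable {n : Type*} [Fintype n]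

lemma trace_conjTranspose_mul_mul_comm {A : Matrix n n ℂ} (hA : A.IsHermitian)
    (X Y : Matrix n n ℂ) : (Xᴴ * A * Y).trace = star (Yᴴ * A * X).trace := by
  rw [← trace_conjTranspose, conjTranspose_mul, conjTranspose_mul, hA.eq,
    conjTranspose_conjTranspose, Matrix.mul_assoc]

lemma re_trace_conjTranspose_mul_mul_sub_smul {A : Matrix n n ℂ} (hA : A.IsHermitian)
    (X U : Matrix n n ℂ) (t : ℝ) :
    ((X - t • U)ᴴ * A * (X - t • U)).trace.re =
      (Xᴴ * A * X).trace.re - 2 * t * (Uᴴ * A * X).trace.re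
        + t ^ 2 * (Uᴴ * A * U).trace.re := by
  have hswap := congrArg Complex.re (trace_conjTranspose_mul_mul_comm hA X U)
  simp only [conjTranspose_sub, conjTranspose_smul, star_trivial, Matrix.sub_mul,
    Matrix.mul_sub, Matrix.smul_mul, Matrix.mul_smul, trace_sub, trace_smul,
    Complex.sub_re, Complex.real_smul, Complex.re_ofReal_mul] at hswap ⊢
  rw [hswap, Complex.star_def, Complex.conj_re]
  ring

lemma re_trace_conjTranspose_mul_mul_nonneg {A : Matrix n n ℂ} (hA : A.PosSemidef)
    (X : Matrix n n ℂ) : 0 ≤ (Xᴴ * A * X).trace.re :=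
  (Complex.nonneg_iff.mp (hA.conjTranspose_mul_mul_same X).trace_nonneg).1

lemma trace_mul_vecMulVec_star (X : Matrix n n ℂ) (w : n → ℂ) :
    (X * vecMulVec w (star w)).trace = star w ⬝ᵥ X *ᵥ w := by
  rw [mul_vecMulVec, trace_vecMulVec, dotProduct_comm]

variable [DecidableEq n] {C : Matrix n n ℂ}

lemma trace_conjTranspose_mul_vecMulVec_mul_inv_mul (hC : C.IsHermitian) (hdet : IsUnit C.det)
    (w : n → ℂ) (X : Matrix n n ℂ) :
    ((C * vecMulVec w (star w))ᴴ * C⁻¹ * X).trace = star w ⬝ᵥ X *ᵥ w := by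
  rw [conjTranspose_mul, conjTranspose_vecMulVec, star_star, hC.eq, Matrix.mul_assoc,
    Matrix.mul_assoc, mul_nonsing_inv_cancel_left (A := C) X hdet, trace_mul_comm,
    trace_mul_vecMulVec_star]

lemma trace_conjTranspose_mul_vecMulVec_mul_inv_mul_self (hC : C.IsHermitian)
    (hdet : IsUnit C.det) (w : n → ℂ) :
    ((C * vecMulVec w (star w))ᴴ * C⁻¹ * (C * vecMulVec w (star w))).trace =
      (star w ⬝ᵥ C *ᵥ w) * (star w ⬝ᵥ w) := by
  rw [trace_conjTranspose_mul_vecMulVec_mul_inv_mul hC hdet, mul_vecMulVec, vecMulVec_mulVec]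
  simp [dotProduct_smul, mul_comm]

end Matrix

section QuadraticForm

variable {N : ℕ}

lemma ofReal_qf {M : Matrix (Fin N) (Fin N) ℂ} (hM : M.IsHermitian) (w : Fin N → ℂ) :
    (qf M w : ℂ) = star w ⬝ᵥ M *ᵥ w :=
  Complex.ext (by simp [qf]) (by simpa [qf] using (hM.im_star_dotProduct_mulVec_self w).symm)

lemma qf_one_pos {w : Fin N → ℂ} (hw : w ≠ 0) : 0 < qf 1 w := by
  simpa [qf] using (Complex.pos_iff.mp (dotProduct_star_self_pos_iff.mpr hw)).1

lemma qf_eq_add_qf_sub (R S : Matrix (Fin N) (Fin N) ℂ) (w : Fin N → ℂ) :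
    qf R w = qf S w + qf (R - S) w := by
  simp [qf, sub_mulVec]

lemma qf_sub_mul_trace_eq {C : Matrix (Fin N) (Fin N) ℂ} (hC : C.IsHermitian)
    (hdet : IsUnit C.det) (w : Fin N → ℂ)
    (R S Rstar : Matrix (Fin N) (Fin N) ℂ) {μ : ℝ} (hμ : μ ≠ 0)
    (hRstar : Rstar = S + (1 / (2 * μ)) • (C * vecMulVec w (star w))) :
    qf R w - μ * ((R - S)ᴴ * C⁻¹ * (R - S)).trace.re =
      qf S w + qf 1 w * qf C w / (4 * μ)
        - μ * ((R - Rstar)ᴴ * C⁻¹ * (R - Rstar)).trace.re := by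
  have hnormSq : (qf 1 w : ℂ) = star w ⬝ᵥ w := by
    rw [ofReal_qf isHermitian_one, one_mulVec]
  rw [hRstar, show R - (S + (1 / (2 * μ)) • (C * vecMulVec w (star w))) =
      (R - S) - (1 / (2 * μ)) • (C * vecMulVec w (star w)) by abel,
    re_trace_conjTranspose_mul_mul_sub_smul hC.inv,
    trace_conjTranspose_mul_vecMulVec_mul_inv_mul hC hdet,
    trace_conjTranspose_mul_vecMulVec_mul_inv_mul_self hC hdet,
    ← ofReal_qf hC, ← hnormSq, ← Complex.ofReal_mul, Complex.ofReal_re,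
    qf_eq_add_qf_sub R S w]
  unfold qf
  field_simp
  ring

end QuadraticForm

theorem stmt7_general {N : ℕ} (w : Fin N → ℂ) (hw : w ≠ 0) (Rh C : Matrix (Fin N) (Fin N) ℂ)
    (hC : C.PosDef) (k : ℝ) (hk : 0 < k)
    (f : Matrix (Fin N) (Fin N) ℂ → ℝ)
    (hf : f = fun R => qf R w
      - k * qf (1 : Matrix (Fin N) (Fin N) ℂ) w * ((R - Rh)ᴴ * C⁻¹ * (R - Rh)).trace.re)
    (Rstar : Matrix (Fin N) (Fin N) ℂ)
    (hRstar : Rstar = Rh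
      + (1 / (2 * k * qf (1 : Matrix (Fin N) (Fin N) ℂ) w)) • (C * vecMulVec w (star w))) :
    (∀ R : Matrix (Fin N) (Fin N) ℂ, f R ≤ f Rstar) ∧
    f Rstar = qf Rh w + (1 / (4 * k)) * qf C w := by
  have hμ : 0 < k * qf 1 w := mul_pos hk (qf_one_pos hw)
  have hf_eq : ∀ R, f R = qf Rh w + (1 / (4 * k)) * qf C w
      - k * qf 1 w * ((R - Rstar)ᴴ * C⁻¹ * (R - Rstar)).trace.re := by
    intro R
    rw [hf]
    dsimp only
    rw [qf_sub_mul_trace_eq hC.isHermitian hC.det_pos.ne'.isUnit w R Rh Rstar hμ.ne'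
      (by rw [hRstar, mul_assoc])]
    field_simp [hk.ne', (qf_one_pos hw).ne']
  refine ⟨fun R => ?_, by simp [hf_eq]⟩
  simpa [hf_eq] using
    mul_nonneg hμ.le (re_trace_conjTranspose_mul_mul_nonneg hC.inv.posSemidef (R - Rstar))

theorem stmt7 {N : ℕ} (w : Fin N → ℂ) (hw : w ≠ 0) (Rh C : Matrix (Fin N) (Fin N) ℂ)
    (hRh : Rh.IsHermitian) (hC : C.PosDef) (k : ℝ) (hk : 0 < k)
    (f : Matrix (Fin N) (Fin N) ℂ → ℝ)
    (hf : f = fun R => qf R w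
      - k * qf (1 : Matrix (Fin N) (Fin N) ℂ) w * ((R - Rh)ᴴ * C⁻¹ * (R - Rh)).trace.re)
    (Rstar : Matrix (Fin N) (Fin N) ℂ)
    (hRstar : Rstar = Rh
      + (1 / (2 * k * qf (1 : Matrix (Fin N) (Fin N) ℂ) w)) • (C * vecMulVec w (star w))) :
    (∀ R : Matrix (Fin N) (Fin N) ℂ, f R ≤ f Rstar) ∧
    f Rstar = qf Rh w + (1 / (4 * k)) * qf C w :=
  stmt7_general w hw Rh C hC k hk f hf Rstar hRstar
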